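/- Properties of the curvature map ρ in the non-supergravity branch: for every φ ∈ ℝ⁵, defining ρ_{μνστ} := φ² η_{μ[σ} η_{τ]ν} − φ_μ φ_{[σ} η_{τ]ν} + φ_ν φ_{[σ} η_{τ]μ} (with φ² := Σ_μ φ_μ φ^μ and X_{[σ} Y_{τ]} := (1/2)(X_σ Y_τ − X_τ Y_σ)), one has: (1) Σ_τ ρ_{μνστ} φ^τ = 0 for all μ, ν, σ ∈ Fin 5 (ρ takes values in the stabilizer of φ), and (2) ρ_{μνστ} + ρ_{νσμτ} + ρ_{σμντ} = 0 for all μ, ν, σ, τ ∈ Fin 5 (the first Bianchi identity ρ_{[μνσ]τ} = 0). -/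
import Mathlib

noncomputable section

def etaR (μ ν : Fin 5) : ℝ := if μ = ν then (if μ = 0 then 1 else -1) else 0

def rhoP (φ : Fin 5 → ℝ) (μ ν σ τ : Fin 5) : ℝ :=
  (∑ α, φ α * (etaR α α * φ α)) * ((1/2 : ℝ) * (etaR μ σ * etaR τ ν - etaR μ τ * etaR σ ν))
    - φ μ * ((1/2 : ℝ) * (φ σ * etaR τ ν - φ τ * etaR σ ν))
    + φ ν * ((1/2 : ℝ) * (φ σ * etaR τ μ - φ τ * etaR σ μ))

lemma etaR_symm (a b : Fin 5) : etaR a b = etaR b a := by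
  unfold etaR; rcases eq_or_ne a b with h | h <;> simp [h, eq_comm]

lemma contract (φ : Fin 5 → ℝ) (ν : Fin 5) :
    ∑ τ, etaR τ ν * (etaR τ τ * φ τ) = φ ν := by
  fin_cases ν <;> simp [etaR, Fin.sum_univ_five]

/-- Properties of the curvature map ρ in the non-supergravity branch:
    (1) ρ_{μνστ} φ^τ = 0 (ρ takes values in the stabiliser of φ), and
    (2) ρ_{[μνσ]τ} = 0 (the first Bianchi identity). -/
theorem rho_properties (φ : Fin 5 → ℝ) :
    (∀ μ ν σ : Fin 5, ∑ τ, rhoP φ μ ν σ τ * (etaR τ τ * φ τ) = 0) ∧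
    (∀ μ ν σ τ : Fin 5, rhoP φ μ ν σ τ + rhoP φ ν σ μ τ + rhoP φ σ μ ν τ = 0) := by
  constructor
  · intro μ ν σ
    set S := ∑ α, φ α * (etaR α α * φ α) with hS
    have key : ∀ τ, rhoP φ μ ν σ τ * (etaR τ τ * φ τ) =
        (S * (1/2) * etaR μ σ - φ μ * φ σ * (1/2)) * (etaR τ ν * (etaR τ τ * φ τ))
        + (φ ν * φ σ * (1/2) - S * (1/2) * etaR σ ν) * (etaR τ μ * (etaR τ τ * φ τ))
        + (φ μ * etaR σ ν * (1/2) - φ ν * etaR σ μ * (1/2)) * (φ τ * (etaR τ τ * φ τ)) := by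
      intro τ
      simp only [rhoP, ← hS]
      rw [etaR_symm μ τ]
      ring
    rw [Finset.sum_congr rfl (fun τ _ => key τ)]
    rw [Finset.sum_add_distrib, Finset.sum_add_distrib, ← Finset.mul_sum, ← Finset.mul_sum,
      ← Finset.mul_sum, contract, contract, ← hS]
    rw [etaR_symm σ μ]
    ring
  · intro μ ν σ τ
    simp only [rhoP]
    rw [etaR_symm ν μ, etaR_symm σ μ, etaR_symm σ ν, etaR_symm τ μ, etaR_symm τ ν, etaR_symm τ σ]
    ring
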